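/- arXiv:2210.07068 — 2 statements merged into one kernel-verified Lean document; each statement's English description precedes it below -/
import Mathlib

section
/- There is no family of functions h_v : {X, Y, Z} → {-1, 1} indexed by v ∈ {1, 2, 3} satisfying simultaneously h_1(X)·h_2(X)·h_3(X) = -1, h_1(X)·h_2(Y)·h_3(Y) = 1, h_1(Y)·h_2(X)·h_3(Y) = 1, and h_1(Y)·h_2(Y)·h_3(X) = 1. -/
/-! Multiplying the four constraints, every value occurs exactly twice on the left, so the
product of the left-hand sides is a square, while the product of the right-hand sides is `-1`. -/

theorem ghz_products_mul_eq_sq {M : Type*} [CommMonoid M] (x₁ y₁ x₂ y₂ x₃ y₃ : M) :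
    x₁ * x₂ * x₃ * (x₁ * y₂ * y₃) * (y₁ * x₂ * y₃) * (y₁ * y₂ * x₃) =
      (x₁ * y₁ * x₂ * y₂ * x₃ * y₃) ^ 2 := by
  rw [sq]
  ac_rfl

/-- The GHZ/Mermin paradox: no deterministic ±1 assignment of outcomes to the two
settings (`0` = X, `1` = Y) of three parties satisfies the four GHZ constraints. -/
theorem stmt1 : ¬ ∃ h : Fin 3 → Fin 2 → ℤ,
    (∀ (i : Fin 3) (s : Fin 2), h i s = 1 ∨ h i s = -1) ∧
    h 0 0 * h 1 0 * h 2 0 = -1 ∧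
    h 0 0 * h 1 1 * h 2 1 = 1 ∧
    h 0 1 * h 1 0 * h 2 1 = 1 ∧
    h 0 1 * h 1 1 * h 2 0 = 1 := by
  rintro ⟨h, -, hXXX, hXYY, hYXY, hYYX⟩
  have hsq := ghz_products_mul_eq_sq (h 0 0) (h 0 1) (h 1 0) (h 1 1) (h 2 0) (h 2 1)
  rw [hXXX, hXYY, hYXY, hYYX] at hsq
  linarith [sq_nonneg (h 0 0 * h 0 1 * h 1 0 * h 1 1 * h 2 0 * h 2 1)]
end

section
/- For any functions a, a', b, b' : Λ → {-1, 1} on a set Λ of hidden variables and any probability measure ρ on Λ, the integral of a(λ)b(λ) + a(λ)b'(λ) + a'(λ)b(λ) − a'(λ)b'(λ) with respect to ρ is at most 2. -/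
open MeasureTheory

/-- Writing the sum as `x (y + y') + x' (y - y')`, it is bounded by `|y + y'| + |y - y'|`,
which equals `2 max (|y|, |y'|)`. -/
theorem abs_chsh_le_two {x x' y y' : ℝ} (hx : |x| ≤ 1) (hx' : |x'| ≤ 1) (hy : |y| ≤ 1)
    (hy' : |y'| ≤ 1) : |x * y + x * y' + x' * y - x' * y'| ≤ 2 := by
  have hsum : |y + y'| + |y - y'| ≤ 2 := by
    rw [abs_le] at hy hy'
    rcases abs_cases (y + y') with ⟨h₁, -⟩ | ⟨h₁, -⟩ <;>
      rcases abs_cases (y - y') with ⟨h₂, -⟩ | ⟨h₂, -⟩ <;> linarith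
  calc |x * y + x * y' + x' * y - x' * y'| = |x * (y + y') + x' * (y - y')| := by ring_nf
    _ ≤ |x| * |y + y'| + |x'| * |y - y'| := by
      rw [← abs_mul, ← abs_mul]; exact abs_add_le _ _
    _ ≤ 1 * |y + y'| + 1 * |y - y'| := by gcongr
    _ ≤ 2 := by linarith

theorem abs_le_one_of_eq_one_or_eq_neg_one {x : ℝ} (h : x = 1 ∨ x = -1) : |x| ≤ 1 := by
  rcases h with rfl | rfl <;> simp

theorem stmt2_general {Λ : Type} [MeasurableSpace Λ] (ρ : Measure Λ) [IsProbabilityMeasure ρ]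
    (a a' b b' : Λ → ℝ)
    (ha : ∀ lam, a lam = 1 ∨ a lam = -1) (ha' : ∀ lam, a' lam = 1 ∨ a' lam = -1)
    (hb : ∀ lam, b lam = 1 ∨ b lam = -1) (hb' : ∀ lam, b' lam = 1 ∨ b' lam = -1) :
    (∫ lam, (a lam * b lam + a lam * b' lam + a' lam * b lam - a' lam * b' lam) ∂ρ) ≤ 2 := by
  have hbound : ∀ lam,
      ‖a lam * b lam + a lam * b' lam + a' lam * b lam - a' lam * b' lam‖ ≤ 2 := fun lam =>
    abs_chsh_le_two (abs_le_one_of_eq_one_or_eq_neg_one (ha lam))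
      (abs_le_one_of_eq_one_or_eq_neg_one (ha' lam)) (abs_le_one_of_eq_one_or_eq_neg_one (hb lam))
      (abs_le_one_of_eq_one_or_eq_neg_one (hb' lam))
  calc (∫ lam, (a lam * b lam + a lam * b' lam + a' lam * b lam - a' lam * b' lam) ∂ρ)
      ≤ ‖∫ lam, (a lam * b lam + a lam * b' lam + a' lam * b lam - a' lam * b' lam) ∂ρ‖ :=
        Real.le_norm_self _
    -- valid for any bounded integrand: a non-integrable one has Bochner integral `0`
    _ ≤ 2 * ρ.real Set.univ := norm_integral_le_of_norm_le_const (ae_of_all ρ hbound)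
    _ = 2 := by simp

/-- The CHSH inequality for deterministic local hidden variable models. -/
theorem stmt2 {Λ : Type} [MeasurableSpace Λ] (ρ : Measure Λ) [IsProbabilityMeasure ρ]
    (a a' b b' : Λ → ℝ)
    (ha : ∀ lam, a lam = 1 ∨ a lam = -1) (ha' : ∀ lam, a' lam = 1 ∨ a' lam = -1)
    (hb : ∀ lam, b lam = 1 ∨ b lam = -1) (hb' : ∀ lam, b' lam = 1 ∨ b' lam = -1)
    (hma : Measurable a) (hma' : Measurable a')
    (hmb : Measurable b) (hmb' : Measurable b') :
    (∫ lam, (a lam * b lam + a lam * b' lam + a' lam * b lam - a' lam * b' lam) ∂ρ) ≤ 2 :=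
  stmt2_general ρ a a' b b' ha ha' hb hb'
end
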